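/- In the same OV-reduction graph G_t, if a, b ∈ A are orthogonal vectors (no index j with a[j] = b[j] = 1), then the min-distance between the copies a_1 ∈ A_1 and b_1 ∈ A_1 is at least 2t+1; hence the min-diameter of G_t is at least 2t+1. -/

import Mathlib

/-- Length (number of edges) of a shortest directed path from `a` to `b`
in the digraph with edge relation `E`; `⊤` if there is no path. -/
noncomputable def ddist {V : Type*} (E : V → V → Prop) (a b : V) : ℕ∞ :=
  sInf {n : ℕ∞ | ∃ l : List V, List.Chain E a l ∧
    (a :: l).getLast (List.cons_ne_nil a l) = b ∧ n = l.length}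

/-- The OV-reduction graph G_t: vertices are copies A_1, …, A_t of the vector
set (encoded as \`(i, a)\` with \`i : Fin t\`, \`i = 0\` meaning A_1 and
\`i = t-1\` meaning A_t) together with index vertices \`Fin d\`. Edges:
a_1 → x_j and x_j → a_t when a[j] = 1, a_i → a_{i-1} for 2 ≤ i ≤ t, and all
edges A_2 → I. -/
def ovE (t d : ℕ) {α : Type*} (vec : α → Fin d → Bool) :
    ((Fin t × α) ⊕ Fin d) → ((Fin t × α) ⊕ Fin d) → Prop :=
  fun u v => match u, v with
  | Sum.inl (i, a), Sum.inr j => (i.1 = 0 ∧ vec a j = true) ∨ i.1 = 1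
  | Sum.inr j, Sum.inl (i, a) => i.1 = t - 1 ∧ vec a j = true
  | Sum.inl (i, a), Sum.inl (i2, a2) => a = a2 ∧ i2.1 + 1 = i.1
  | _, _ => False

/-!
If `φ` drops by at most one along every edge, then `d(u, v) ≥ φ u - φ v`. Towards the copy of
`b` in `A_1`, such a `φ` is given by lower bounds on the distances from the index vertices: `t`
from an `x_j` with `b[j] = 1` (into `A_t`, then down the matching), and `2t` from one with
`b[j] = 0`, which must first return to `I` through `A_t, …, A_2`. Since every edge out of `A_1`
goes to `I`, the copy in `A_1` of a vector orthogonal to `b` only reaches indices with `b[j] = 0`,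
so its potential is `2t + 1`.
-/

section Potential

variable {V : Type*} {E : V → V → Prop} {φ : V → ℕ}

theorem List.IsChain.potential_le (hφ : ∀ u v, E u v → φ u ≤ φ v + 1) :
    ∀ {a : V} {l : List V}, (a :: l).IsChain E →
      φ a ≤ φ ((a :: l).getLast (List.cons_ne_nil a l)) + l.length
  | _, [], _ => by simp
  | _, _ :: _, h => by
    obtain ⟨hab, hl⟩ := List.isChain_cons_cons.mp h
    have := hφ _ _ hab
    have := hl.potential_le hφ
    rw [List.getLast_cons (List.cons_ne_nil _ _), List.length_cons]
    omega

theorem potential_sub_le_ddist (hφ : ∀ u v, E u v → φ u ≤ φ v + 1) (a b : V) :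
    ((φ a - φ b : ℕ) : ℕ∞) ≤ ddist E a b := by
  refine le_sInf ?_
  rintro _ ⟨l, hl, rfl, rfl⟩
  have := hl.potential_le hφ
  exact_mod_cast (by omega : φ a - _ ≤ l.length)

end Potential

section OVGraph

variable {α : Type*} {t d : ℕ} {vec : α → Fin d → Bool}

open Classical in
noncomputable def ovPotential (t d : ℕ) (vec : α → Fin d → Bool) (b : α) :
    (Fin t × α) ⊕ Fin d → ℕ
  | .inr j => if vec b j = true then t else 2 * t
  | .inl (i, c) =>
      if c = b then i.1
      else if i.1 = 0 then
        (if ∀ j, ¬ (vec c j = true ∧ vec b j = true) then 2 * t + 1 else t + 1)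
      else i.1 + t

theorem ovPotential_le_succ (b : α) :
    ∀ u v, ovE t d vec u v → ovPotential t d vec b u ≤ ovPotential t d vec b v + 1
  | .inl (i, c), .inr j, h => by
    simp only [ovE, ovPotential] at h ⊢
    split_ifs <;> grind
  | .inr j, .inl (i, c), h => by
    simp only [ovE, ovPotential] at h ⊢
    split_ifs <;> grind
  | .inl (i, c), .inl (i', c'), h => by
    simp only [ovE, ovPotential] at h ⊢
    split_ifs <;> grind
  | .inr _, .inr _, h => h.elim

theorem two_mul_add_one_le_ddist_ovE_of_orthogonal (ht : 0 < t) {a b : α}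
    (ha : ∃ j, vec a j = true) (horth : ∀ j, ¬ (vec a j = true ∧ vec b j = true)) :
    ((2 * t + 1 : ℕ) : ℕ∞) ≤ ddist (ovE t d vec) (.inl (⟨0, ht⟩, a)) (.inl (⟨0, ht⟩, b)) := by
  have hab : a ≠ b := by
    rintro rfl
    obtain ⟨j, hj⟩ := ha
    exact horth j ⟨hj, hj⟩
  simpa [ovPotential, hab, horth] using potential_sub_le_ddist (ovPotential_le_succ (vec := vec) b)
    (.inl (⟨0, ht⟩, a)) (.inl (⟨0, ht⟩, b))

end OVGraph

/-- YES case: if a, b are orthogonal vectors, the min-distance between their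
copies a_1, b_1 ∈ A_1 is at least 2t+1; hence the min-diameter of G_t is at
least 2t+1. -/
theorem stmt13 {α : Type*} (t d : ℕ) (ht : 2 ≤ t) (vec : α → Fin d → Bool)
    (hone : ∀ c : α, ∃ j : Fin d, vec c j = true)
    (a b : α) (horth : ∀ j : Fin d, ¬ (vec a j = true ∧ vec b j = true)) :
    ((2 * t + 1 : ℕ) : ℕ∞) ≤
      min (ddist (ovE t d vec) (Sum.inl (⟨0, by omega⟩, a)) (Sum.inl (⟨0, by omega⟩, b)))
        (ddist (ovE t d vec) (Sum.inl (⟨0, by omega⟩, b)) (Sum.inl (⟨0, by omega⟩, a))) :=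
  le_min (two_mul_add_one_le_ddist_ovE_of_orthogonal _ (hone a) horth)
    (two_mul_add_one_le_ddist_ovE_of_orthogonal _ (hone b) fun j h => horth j h.symm)
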